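/- arXiv:2001.04886 — 2 statements merged into one kernel-verified Lean document; each statement's English description precedes it below -/
import Mathlib

section
/- Let A be an n×n real matrix such that ⟨A x, x⟩ ≥ μ ‖x‖₂² for all x ∈ ℝⁿ, where μ > 0, and let σ = ‖A‖ be the operator norm of A with respect to the Euclidean norm. Let r ∈ ℝⁿ with r ≠ 0, and set a = ⟨r, A r⟩ / ⟨A r, A r⟩. Then ‖r - a A r‖₂² ≤ (1 - μ²/σ²) ‖r‖₂². -/
open Matrix
open scoped RealInnerProductSpace

/-- Matrix-vector multiplication viewed as a map on Euclidean space. -/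
noncomputable def mulVecE {n : ℕ} (A : Matrix (Fin n) (Fin n) ℝ) (x : EuclideanSpace ℝ (Fin n)) :
    EuclideanSpace ℝ (Fin n) :=
  (WithLp.equiv 2 (Fin n → ℝ)).symm (A.mulVec (WithLp.equiv 2 (Fin n → ℝ) x))

lemma mulVecE_eq_clm {n : ℕ} (A : Matrix (Fin n) (Fin n) ℝ) (x : EuclideanSpace ℝ (Fin n)) :
    mulVecE A x = Matrix.toEuclideanCLM (𝕜 := ℝ) A x := by
  apply (WithLp.equiv 2 (Fin n → ℝ)).injective
  rw [mulVecE]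
  rfl

/-- One-step residual contraction of the minimal-residual iteration for a definite matrix:
if `⟨A x, x⟩ ≥ μ ‖x‖₂²` for all `x` with `μ > 0`, `σ = ‖A‖` is the operator norm of `A`
(w.r.t. the Euclidean norm), `r ≠ 0`, and `a = ⟪r, A r⟫ / ⟪A r, A r⟫` is the MR steplength,
then `‖r - a A r‖₂² ≤ (1 - μ²/σ²) ‖r‖₂²`. -/
theorem mr_one_step_contraction {n : ℕ} (A : Matrix (Fin n) (Fin n) ℝ)
    (μ : ℝ) (hμ : 0 < μ)
    (hdef : ∀ x : EuclideanSpace ℝ (Fin n), μ * ‖x‖ ^ 2 ≤ ⟪mulVecE A x, x⟫)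
    (σ : ℝ) (hσ : σ = ‖Matrix.toEuclideanCLM (𝕜 := ℝ) A‖)
    (r : EuclideanSpace ℝ (Fin n)) (hr : r ≠ 0)
    (a : ℝ) (ha : a = ⟪r, mulVecE A r⟫ / ⟪mulVecE A r, mulVecE A r⟫) :
    ‖r - a • mulVecE A r‖ ^ 2 ≤ (1 - μ ^ 2 / σ ^ 2) * ‖r‖ ^ 2 := by
  set Ar := mulVecE A r with hAr
  set c : ℝ := ⟪r, Ar⟫ with hc
  have hrpos : (0:ℝ) < ‖r‖ := norm_pos_iff.mpr hr
  have hrr : 0 < μ * ‖r‖ ^ 2 := by positivity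
  have hcpos : 0 < c := lt_of_lt_of_le hrr (by rw [hc, real_inner_comm]; exact hdef r)
  have hcge : μ * ‖r‖ ^ 2 ≤ c := by rw [hc, real_inner_comm]; exact hdef r
  have hArne : Ar ≠ 0 := by
    intro h
    rw [hc, h, inner_zero_right] at hcpos
    exact lt_irrefl 0 hcpos
  have hArpos : (0:ℝ) < ‖Ar‖ := norm_pos_iff.mpr hArne
  have hd : ⟪Ar, Ar⟫ = ‖Ar‖ ^ 2 := real_inner_self_eq_norm_sq Ar
  -- σ bounds
  have hArle : ‖Ar‖ ≤ σ * ‖r‖ := by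
    rw [hσ, hAr, mulVecE_eq_clm]
    exact (Matrix.toEuclideanCLM (𝕜 := ℝ) A).le_opNorm r
  have hσpos : 0 < σ := by
    nlinarith [abs_real_inner_le_norm r Ar, abs_of_pos hcpos]
  -- expand the norm
  have hexp : ‖r - a • Ar‖ ^ 2 = ‖r‖ ^ 2 - 2 * a * c + a ^ 2 * ‖Ar‖ ^ 2 := by
    rw [norm_sub_sq_real, real_inner_smul_right, norm_smul, Real.norm_eq_abs, mul_pow, sq_abs,
      ← hc]
    ring
  have haval : a = c / ‖Ar‖ ^ 2 := by rw [ha, hd]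
  have hAr2 : (0:ℝ) < ‖Ar‖ ^ 2 := by positivity
  have hkey : ‖r - a • Ar‖ ^ 2 = ‖r‖ ^ 2 - c ^ 2 / ‖Ar‖ ^ 2 := by
    rw [hexp, haval]; field_simp; ring
  rw [hkey]
  have h1 : μ ^ 2 / σ ^ 2 * ‖r‖ ^ 2 ≤ c ^ 2 / ‖Ar‖ ^ 2 := by
    rw [div_mul_eq_mul_div, div_le_div_iff₀ (by positivity) hAr2]
    have h2 : ‖Ar‖ ^ 2 ≤ σ ^ 2 * ‖r‖ ^ 2 := by nlinarith
    have hcsq : μ ^ 2 * ‖r‖ ^ 4 ≤ c ^ 2 := by nlinarith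
    nlinarith [mul_le_mul_of_nonneg_left h2 (mul_nonneg (sq_nonneg μ) (sq_nonneg ‖r‖)),
      mul_le_mul_of_nonneg_right hcsq (sq_nonneg σ)]
  linarith
end

section
/- Let A be an n×n real matrix such that ⟨A x, x⟩ ≥ μ ‖x‖₂² for all x ∈ ℝⁿ with μ > 0, and let σ = ‖A‖ be the operator norm of A. Fix s ≥ 1, let r₀ ∈ ℝⁿ, and define a sequence of residuals by: r_{i+1} = r_i - A z_i, where z_i ∈ K_s(A, r_i) minimizes ‖r_i - A z‖₂ over z ∈ K_s(A, r_i). Then for every i, ‖r_{i+1}‖₂² ≤ (1 - μ²/σ²) ‖r_i‖₂², and hence ‖r_k‖₂² ≤ (1 - μ²/σ²)^k ‖r₀‖₂² for all k, so the residuals converge to zero. -/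
open Matrix
open scoped RealInnerProductSpace

/-- The Krylov subspace `K_s(A, v) = span {v, A v, ..., A^(s-1) v}`. -/
def krylov {n : ℕ} (A : Matrix (Fin n) (Fin n) ℝ) (v : EuclideanSpace ℝ (Fin n)) (s : ℕ) :
    Submodule ℝ (EuclideanSpace ℝ (Fin n)) :=
  Submodule.span ℝ (Set.range fun j : Fin s => mulVecE (A ^ (j : ℕ)) v)

lemma mulVecE_smul {n : ℕ} (A : Matrix (Fin n) (Fin n) ℝ) (c : ℝ) (x : EuclideanSpace ℝ (Fin n)) :
    mulVecE A (c • x) = c • mulVecE A x := by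
  simp [mulVecE_eq_clm]

lemma mulVecE_one {n : ℕ} (x : EuclideanSpace ℝ (Fin n)) :
    mulVecE (1 : Matrix (Fin n) (Fin n) ℝ) x = x := by
  simp [mulVecE_eq_clm]

lemma mulVecE_zero {n : ℕ} (A : Matrix (Fin n) (Fin n) ℝ) :
    mulVecE A (0 : EuclideanSpace ℝ (Fin n)) = 0 := by
  simp [mulVecE_eq_clm]

lemma mr_step_bound {n : ℕ} (A : Matrix (Fin n) (Fin n) ℝ) (μ σ : ℝ) (hμ : 0 < μ)
    (hdef : ∀ x : EuclideanSpace ℝ (Fin n), μ * ‖x‖ ^ 2 ≤ ⟪mulVecE A x, x⟫)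
    (hop : ∀ x : EuclideanSpace ℝ (Fin n), ‖mulVecE A x‖ ≤ σ * ‖x‖)
    (v : EuclideanSpace ℝ (Fin n)) (hv : v ≠ 0) :
    ‖v - mulVecE A ((⟪mulVecE A v, v⟫ / ‖mulVecE A v‖ ^ 2) • v)‖ ^ 2
      ≤ (1 - μ ^ 2 / σ ^ 2) * ‖v‖ ^ 2 := by
  set u := mulVecE A v with hu
  have hvn : 0 < ‖v‖ := norm_pos_iff.mpr hv
  have hinner : 0 < ⟪u, v⟫ := lt_of_lt_of_le (by positivity) (hdef v)
  have hun : 0 < ‖u‖ := by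
    rcases eq_or_ne u 0 with h | h
    · rw [h] at hinner; simp at hinner
    · exact norm_pos_iff.mpr h
  have hμσ : μ ≤ σ := by
    have h1 : μ * ‖v‖ ^ 2 ≤ ⟪u, v⟫ := hdef v
    have h2 : ⟪u, v⟫ ≤ ‖u‖ * ‖v‖ := real_inner_le_norm u v
    have h3 : ‖u‖ * ‖v‖ ≤ (σ * ‖v‖) * ‖v‖ := by
      apply mul_le_mul_of_nonneg_right (hop v) (norm_nonneg v)
    have h4 : μ * ‖v‖ ^ 2 ≤ σ * ‖v‖ ^ 2 := by nlinarith
    exact le_of_mul_le_mul_right h4 (pow_pos hvn 2)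
  have hσ : 0 < σ := lt_of_lt_of_le hμ hμσ
  set α := ⟪u, v⟫ / ‖u‖ ^ 2 with hα
  have hexp : ‖v - mulVecE A (α • v)‖ ^ 2 = ‖v‖ ^ 2 - ⟪u, v⟫ ^ 2 / ‖u‖ ^ 2 := by
    rw [mulVecE_smul, ← hu]
    rw [norm_sub_sq_real, norm_smul, real_inner_smul_right, real_inner_comm,
      mul_pow, Real.norm_eq_abs, sq_abs]
    rw [hα]
    have : ‖u‖ ≠ 0 := ne_of_gt hun
    field_simp
    ring
  rw [hexp]
  have key : (μ ^ 2 / σ ^ 2) * ‖v‖ ^ 2 ≤ ⟪u, v⟫ ^ 2 / ‖u‖ ^ 2 := by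
    have h1 : (μ * ‖v‖ ^ 2) ^ 2 ≤ ⟪u, v⟫ ^ 2 := by
      apply pow_le_pow_left₀ (by positivity) (hdef v)
    have h2 : ‖u‖ ^ 2 ≤ σ ^ 2 * ‖v‖ ^ 2 := by
      have := hop v
      nlinarith [norm_nonneg u]
    have h3 : (μ * ‖v‖ ^ 2) ^ 2 / (σ ^ 2 * ‖v‖ ^ 2) ≤ ⟪u, v⟫ ^ 2 / ‖u‖ ^ 2 :=
      div_le_div₀ (by positivity) h1 (by positivity) h2
    have h4 : (μ * ‖v‖ ^ 2) ^ 2 / (σ ^ 2 * ‖v‖ ^ 2) = (μ ^ 2 / σ ^ 2) * ‖v‖ ^ 2 := by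
      field_simp
    linarith [h3, h4.symm.le]
  linarith

/-- Convergence of the s-step minimal residual (s-MR) method for a definite matrix:
if `⟨A x, x⟩ ≥ μ ‖x‖₂²` with `μ > 0`, `σ = ‖A‖`, `s ≥ 1`, and `r (i+1) = r i - A (z i)` where
`z i` minimizes `‖r i - A z‖₂` over the Krylov subspace `K_s(A, r i)`, then
`‖r (i+1)‖₂² ≤ (1 - μ²/σ²) ‖r i‖₂²` for every `i`, hence
`‖r k‖₂² ≤ (1 - μ²/σ²)^k ‖r 0‖₂²` for all `k`, and the residuals converge to zero. -/
theorem sstep_mr_convergence {n : ℕ} (A : Matrix (Fin n) (Fin n) ℝ)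
    (μ : ℝ) (hμ : 0 < μ)
    (hdef : ∀ x : EuclideanSpace ℝ (Fin n), μ * ‖x‖ ^ 2 ≤ ⟪mulVecE A x, x⟫)
    (σ : ℝ) (hσ : σ = ‖Matrix.toEuclideanCLM (𝕜 := ℝ) A‖)
    (s : ℕ) (hs : 1 ≤ s)
    (r z : ℕ → EuclideanSpace ℝ (Fin n))
    (hzmem : ∀ i, z i ∈ krylov A (r i) s)
    (hzmin : ∀ i, ∀ w ∈ krylov A (r i) s, ‖r i - mulVecE A (z i)‖ ≤ ‖r i - mulVecE A w‖)
    (hrec : ∀ i, r (i + 1) = r i - mulVecE A (z i)) :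
    (∀ i, ‖r (i + 1)‖ ^ 2 ≤ (1 - μ ^ 2 / σ ^ 2) * ‖r i‖ ^ 2) ∧
    (∀ k, ‖r k‖ ^ 2 ≤ (1 - μ ^ 2 / σ ^ 2) ^ k * ‖r 0‖ ^ 2) ∧
    Filter.Tendsto (fun k => r k) Filter.atTop (nhds 0) := by
  have hop : ∀ x : EuclideanSpace ℝ (Fin n), ‖mulVecE A x‖ ≤ σ * ‖x‖ := by
    intro x
    rw [mulVecE_eq_clm, hσ]
    exact (Matrix.toEuclideanCLM (𝕜 := ℝ) A).le_opNorm x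
  have hrmem : ∀ i, r i ∈ krylov A (r i) s := by
    intro i
    apply Submodule.subset_span
    exact ⟨⟨0, hs⟩, by simp [pow_zero, mulVecE_one]⟩
  -- step bound
  have hstep : ∀ i, ‖r (i + 1)‖ ^ 2 ≤ (1 - μ ^ 2 / σ ^ 2) * ‖r i‖ ^ 2 := by
    intro i
    by_cases hri : r i = 0
    · have h0 := hzmin i 0 (Submodule.zero_mem _)
      rw [hri, mulVecE_zero, sub_zero, norm_zero, zero_sub, norm_neg] at h0
      have hz0 : mulVecE A (z i) = 0 := norm_le_zero_iff.mp h0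
      rw [hrec i, hri, hz0, sub_zero, norm_zero]
      simp
    · set w := (⟪mulVecE A (r i), r i⟫ / ‖mulVecE A (r i)‖ ^ 2) • r i with hw
      have hwmem : w ∈ krylov A (r i) s := Submodule.smul_mem _ _ (hrmem i)
      have h1 : ‖r (i + 1)‖ ≤ ‖r i - mulVecE A w‖ := by
        rw [hrec i]; exact hzmin i w hwmem
      have h2 : ‖r (i + 1)‖ ^ 2 ≤ ‖r i - mulVecE A w‖ ^ 2 :=
        pow_le_pow_left₀ (norm_nonneg _) h1 2
      exact le_trans h2 (mr_step_bound A μ σ hμ hdef hop (r i) hri)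
  refine ⟨hstep, ?_⟩
  by_cases hex : ∀ x : EuclideanSpace ℝ (Fin n), x = 0
  · -- trivial space
    have hr0 : ∀ k, r k = 0 := fun k => hex (r k)
    have hσ0 : σ = 0 := by
      rw [hσ]
      have : Matrix.toEuclideanCLM (𝕜 := ℝ) A = 0 :=
        ContinuousLinearMap.ext fun x => by rw [hex x]; simp
      rw [this, norm_zero]
    constructor
    · intro k
      rw [hr0 k, hr0 0, norm_zero]
      simp [hσ0]
    · rw [show (fun k => r k) = fun _ : ℕ => (0 : EuclideanSpace ℝ (Fin n)) from
        funext fun k => hr0 k]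
      exact tendsto_const_nhds
  · push_neg at hex
    obtain ⟨x, hx⟩ := hex
    have hxn : 0 < ‖x‖ := norm_pos_iff.mpr hx
    have hμσ : μ ≤ σ := by
      have h1 : μ * ‖x‖ ^ 2 ≤ ⟪mulVecE A x, x⟫ := hdef x
      have h2 : ⟪mulVecE A x, x⟫ ≤ ‖mulVecE A x‖ * ‖x‖ := real_inner_le_norm _ _
      have h3 : ‖mulVecE A x‖ * ‖x‖ ≤ (σ * ‖x‖) * ‖x‖ :=
        mul_le_mul_of_nonneg_right (hop x) (norm_nonneg x)
      have h4 : μ * ‖x‖ ^ 2 ≤ σ * ‖x‖ ^ 2 := by nlinarith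
      exact le_of_mul_le_mul_right h4 (pow_pos hxn 2)
    have hσpos : 0 < σ := lt_of_lt_of_le hμ hμσ
    set c := 1 - μ ^ 2 / σ ^ 2 with hc
    have hc0 : 0 ≤ c := by
      have h : μ ^ 2 / σ ^ 2 ≤ 1 := by
        rw [div_le_one (by positivity)]
        nlinarith
      rw [hc]
      linarith
    have hc1 : c < 1 := by
      have h : 0 < μ ^ 2 / σ ^ 2 := by positivity
      rw [hc]
      linarith
    have hgeo : ∀ k, ‖r k‖ ^ 2 ≤ c ^ k * ‖r 0‖ ^ 2 := by
      intro k
      induction k with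
      | zero => simp
      | succ k ih =>
        calc ‖r (k + 1)‖ ^ 2 ≤ c * ‖r k‖ ^ 2 := hstep k
          _ ≤ c * (c ^ k * ‖r 0‖ ^ 2) := mul_le_mul_of_nonneg_left ih hc0
          _ = c ^ (k + 1) * ‖r 0‖ ^ 2 := by ring
    refine ⟨hgeo, ?_⟩
    have htend : Filter.Tendsto (fun k => c ^ k * ‖r 0‖ ^ 2) Filter.atTop (nhds 0) := by
      have := tendsto_pow_atTop_nhds_zero_of_lt_one hc0 hc1
      simpa using this.mul_const (‖r 0‖ ^ 2)
    have hsq : Filter.Tendsto (fun k => ‖r k‖ ^ 2) Filter.atTop (nhds 0) :=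
      squeeze_zero (fun k => by positivity) hgeo htend
    have hnorm : Filter.Tendsto (fun k => ‖r k‖) Filter.atTop (nhds 0) := by
      have := hsq.sqrt
      rw [Real.sqrt_zero] at this
      convert this using 2 with k
      rw [Real.sqrt_sq (norm_nonneg _)]
    exact tendsto_zero_iff_norm_tendsto_zero.mpr hnorm
end
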